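/- arXiv:2010.14134 — 6 statements merged into one kernel-verified Lean document; each statement's English description precedes it below -/
import Mathlib

section
/- If f is a probability density on ℝ that is positive, and f'(x)/f(x) is nonincreasing on (−∞, −a] for some a > 0, then the CDF F(x) = ∫_{−∞}^x f(t)dt has log F concave on (−∞, −a] (i.e., f/F is nonincreasing there). -/
/-!
For `t ≤ x ≤ y ≤ -a` put `d = y - x`. Since `(log f)' = f'/f` is nonincreasing on `(-∞, -a]`,
the increment `t ↦ log f (t + d) - log f t` is nonincreasing on `(-∞, x]`, which gives
`f y * f t ≤ f x * f (t + d)`. Integrating in `t` over `(-∞, x]` and substituting `s = t + d`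
yields `f y * F x ≤ f x * F y`.
-/

open MeasureTheory Set

lemma antitoneOn_sub_comp_add_right {g : ℝ → ℝ} {c d : ℝ} (hg : Differentiable ℝ g)
    (hanti : AntitoneOn (deriv g) (Iic c)) (hd : 0 ≤ d) :
    AntitoneOn (fun t => g (t + d) - g t) (Iic (c - d)) := by
  have hdiff : Differentiable ℝ fun t => g (t + d) - g t :=
    (hg.comp (differentiable_id.add_const d)).sub hg
  refine antitoneOn_of_deriv_nonpos (convex_Iic _) hdiff.continuous.continuousOn
    hdiff.differentiableOn fun t ht => ?_
  rw [interior_Iic, mem_Iio] at ht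
  rw [(((hg (t + d)).hasDerivAt.comp_add_const t d).fun_sub (hg t).hasDerivAt).deriv, sub_nonpos]
  exact hanti (mem_Iic.2 (by linarith)) (mem_Iic.2 (by linarith)) (by linarith)

lemma mul_le_mul_comp_add_of_antitoneOn_logDeriv {f : ℝ → ℝ} {c t x y : ℝ}
    (hdiff : Differentiable ℝ f) (hpos : ∀ x, 0 < f x) (hanti : AntitoneOn (logDeriv f) (Iic c))
    (htx : t ≤ x) (hxy : x ≤ y) (hy : y ≤ c) :
    f y * f t ≤ f x * f (t + (y - x)) := by
  have hderiv : deriv (Real.log ∘ f) = logDeriv f :=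
    funext fun s => Real.deriv_log_comp_eq_logDeriv (hdiff s) (hpos s).ne'
  have hlog := antitoneOn_sub_comp_add_right (fun s => (hdiff s).log (hpos s).ne')
    (hderiv ▸ hanti) (sub_nonneg.2 hxy) (mem_Iic.2 (by linarith)) (mem_Iic.2 (by linarith)) htx
  simp only [add_sub_cancel] at hlog
  rw [← Real.log_le_log_iff (mul_pos (hpos _) (hpos _)) (mul_pos (hpos _) (hpos _)),
    Real.log_mul (hpos _).ne' (hpos _).ne', Real.log_mul (hpos _).ne' (hpos _).ne']
  linarith

lemma setIntegral_Iic_comp_add_right (f : ℝ → ℝ) (x d : ℝ) :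
    ∫ t in Iic x, f (t + d) = ∫ t in Iic (x + d), f t := by
  have hpre : (fun t => t + d) ⁻¹' Iic (x + d) = Iic x := by
    ext t
    simp
  rw [← hpre]
  exact (measurePreserving_add_right volume d).setIntegral_preimage_emb
    (MeasurableEquiv.addRight d).measurableEmbedding f _

lemma setIntegral_Iic_pos {f : ℝ → ℝ} {x : ℝ} (hpos : ∀ x, 0 < f x)
    (hint : IntegrableOn f (Iic x)) : 0 < ∫ t in Iic x, f t := by
  rw [setIntegral_pos_iff_support_of_nonneg_ae (ae_of_all _ fun t => (hpos t).le) hint,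
    Function.support_eq_univ fun t => (hpos t).ne', univ_inter, Real.volume_Iic]
  exact ENNReal.zero_lt_top

theorem logconcave_of_loggrad_antitone_general (f : ℝ → ℝ)
    (hdiff : Differentiable ℝ f) (hpos : ∀ x, 0 < f x)
    (hint : Integrable f)
    (F : ℝ → ℝ) (hF : F = fun x => ∫ t in Set.Iic x, f t)
    (a : ℝ)
    (hanti : AntitoneOn (fun x => deriv f x / f x) (Set.Iic (-a))) :
    AntitoneOn (fun x => f x / F x) (Set.Iic (-a)) := by
  subst hF
  intro x _ y hy hxy
  have hpointwise : ∀ t ∈ Iic x, f y * f t ≤ f x * f (t + (y - x)) := fun t ht =>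
    mul_le_mul_comp_add_of_antitoneOn_logDeriv hdiff hpos hanti ht hxy hy
  have hshift : Integrable fun t => f (t + (y - x)) := hint.comp_add_right _
  have hintegral := setIntegral_mono_on (hint.integrableOn.const_mul (f y))
    (hshift.integrableOn.const_mul (f x)) measurableSet_Iic hpointwise
  rw [integral_const_mul, integral_const_mul, setIntegral_Iic_comp_add_right,
    add_sub_cancel] at hintegral
  dsimp only
  rw [div_le_div_iff₀ (setIntegral_Iic_pos hpos hint.integrableOn)
    (setIntegral_Iic_pos hpos hint.integrableOn)]
  linarith

/-- If `f` is a positive probability density whose log-derivative `f'/f` is nonincreasing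
on `(-∞, -a]` for some `a > 0`, then the CDF `F` is log-concave there,
i.e. `f/F` is nonincreasing on `(-∞, -a]`. -/
theorem logconcave_of_loggrad_antitone (f : ℝ → ℝ)
    (hdiff : Differentiable ℝ f) (hpos : ∀ x, 0 < f x)
    (hint : Integrable f) (hprob : ∫ t, f t = 1)
    (F : ℝ → ℝ) (hF : F = fun x => ∫ t in Set.Iic x, f t)
    (a : ℝ) (ha : 0 < a)
    (hanti : AntitoneOn (fun x => deriv f x / f x) (Set.Iic (-a))) :
    AntitoneOn (fun x => f x / F x) (Set.Iic (-a)) :=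
  logconcave_of_loggrad_antitone_general f hdiff hpos hint F hF a hanti
end

section
/- The symmetric Gaussian mixture with density f = 0.5·N(μ,σ²) + 0.5·N(−μ,σ²) is left-log-concave for all μ ∈ ℝ and σ > 0, i.e., its CDF F is log-concave on (−∞, 0]. -/
/-!
Write the density as `f = exp φ` with `φ x = log c - (x² + μ²) / (2σ²) + log (cosh (μ x / σ²))`
and put `E = f - F φ'`. Then `(f / F)'` has the sign of `-E`, `(F / f)'` the sign of `E`, and
`E' = -F φ''`. At a zero of `E` we have `φ' = f / F > 0`, and for `x < 0` a positive `φ'` forces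
`φ'' < 0`: with `s = μ x / σ²` this is `k tanh s < s ⇒ k < cosh² s`, a consequence of
`s ≤ sinh s cosh s`. Hence `E` cannot pass from nonnegative to negative on `(-∞, 0]`. A point
where `E > 0` exists to the left of any `y`: since `φ' → ∞` at `-∞`, `F / f → 0` there, so
`F / f` cannot be nonincreasing on all of `(-∞, y]`.
-/

open Real Set MeasureTheory Filter Topology ProbabilityTheory

namespace Real

theorem hasDerivAt_tanh (x : ℝ) : HasDerivAt tanh (cosh x ^ 2)⁻¹ x := by
  have h := (hasDerivAt_sinh x).div (hasDerivAt_cosh x) (cosh_pos x).ne'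
  rw [← show tanh = sinh / cosh from funext tanh_eq_sinh_div_cosh] at h
  refine h.congr_deriv ?_
  rw [← sq, ← sq, cosh_sq_sub_sinh_sq, one_div]

theorem hasDerivAt_log_cosh (x : ℝ) : HasDerivAt (fun x => log (cosh x)) (tanh x) x := by
  simpa [tanh_eq_sinh_div_cosh] using (hasDerivAt_cosh x).log (cosh_pos x).ne'

theorem lt_cosh_sq_of_mul_tanh_lt {k s : ℝ} (hs : s ≠ 0) (h : k * (s * tanh s) < s ^ 2) :
    k < cosh s ^ 2 := by
  wlog hs_pos : 0 < s generalizing s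
  · have := this (neg_ne_zero.2 hs) (by simpa [tanh_neg] using h)
      (neg_pos.2 (lt_of_le_of_ne (not_lt.1 hs_pos) hs))
    rwa [cosh_neg] at this
  have hsinh : 0 < sinh s := sinh_pos_iff.2 hs_pos
  have hcosh : 1 ≤ cosh s := one_le_cosh s
  rw [tanh_eq_sinh_div_cosh, mul_div_assoc', mul_div_assoc', div_lt_iff₀ (cosh_pos s)] at h
  have hs_le : s ≤ sinh s * cosh s :=
    (self_le_sinh_iff.2 hs_pos.le).trans (le_mul_of_one_le_right hsinh.le hcosh)
  have hsq : s ^ 2 * cosh s ≤ s * sinh s * cosh s ^ 2 := by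
    calc s ^ 2 * cosh s = s * cosh s * s := by ring
      _ ≤ s * cosh s * (sinh s * cosh s) :=
        mul_le_mul_of_nonneg_left hs_le (mul_nonneg hs_pos.le (cosh_pos s).le)
      _ = s * sinh s * cosh s ^ 2 := by ring
  exact lt_of_mul_lt_mul_left (by linarith) (mul_pos hs_pos hsinh).le

end Real

theorem hasDerivAt_integral_Iic {f : ℝ → ℝ} (hf : Integrable f) (hfc : Continuous f) (x : ℝ) :
    HasDerivAt (fun x => ∫ t in Iic x, f t) (f x) x := by
  have h := intervalIntegral.integral_hasDerivAt_right (hf.intervalIntegrable (a := x) (b := x))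
    (hfc.stronglyMeasurableAtFilter _ _) hfc.continuousAt
  refine (h.const_add (∫ t in Iic x, f t)).congr_of_eventuallyEq
    (Eventually.of_forall fun u => ?_)
  dsimp only
  rw [← intervalIntegral.integral_Iic_sub_Iic hf.integrableOn hf.integrableOn]
  ring

theorem integral_Iic_exp_le_div {φ φ' : ℝ → ℝ} {x δ : ℝ} (hδ : 0 < δ)
    (hφ : ∀ t ≤ x, HasDerivAt φ (φ' t) t) (hδφ' : ∀ t ≤ x, δ ≤ φ' t) :
    ∫ t in Iic x, exp (φ t) ≤ exp (φ x) / δ := by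
  have hmono : MonotoneOn (fun t => φ t - δ * t) (Iic x) := by
    refine monotoneOn_of_hasDerivWithinAt_nonneg (f' := fun t => φ' t - δ) (convex_Iic x)
      (fun t ht => ?_) (fun t ht => ?_) fun t ht => ?_
    · exact ((hφ t ht).sub ((hasDerivAt_id t).const_mul δ)).continuousAt.continuousWithinAt
    · rw [interior_Iic] at ht
      exact (((hφ t ht.le).sub ((hasDerivAt_id' t).const_mul δ)).congr_deriv
        (by ring)).hasDerivWithinAt
    · rw [interior_Iic] at ht
      simpa using hδφ' t ht.le
  calc ∫ t in Iic x, exp (φ t)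
      ≤ ∫ t in Iic x, exp (φ x - δ * x) * exp (δ * t) := by
        refine integral_mono_of_nonneg (ae_of_all _ fun t => (exp_pos _).le)
          ((integrableOn_exp_mul_Iic hδ x).const_mul _) ?_
        refine (ae_restrict_iff' measurableSet_Iic).2 (ae_of_all _ fun t ht => ?_)
        dsimp only
        rw [← exp_add, exp_le_exp]
        have := hmono ht self_mem_Iic ht
        dsimp only at this
        linarith
    _ = exp (φ x) / δ := by
        rw [integral_const_mul, integral_exp_mul_Iic hδ, mul_div_assoc', ← exp_add,
          sub_add_cancel]

theorem tendsto_integral_Iic_exp_div_exp_atBot {φ φ' : ℝ → ℝ}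
    (hφ : ∀ x, HasDerivAt φ (φ' x) x) (hφ' : Tendsto φ' atBot atTop) :
    Tendsto (fun x => (∫ t in Iic x, exp (φ t)) / exp (φ x)) atBot (𝓝 0) := by
  refine tendsto_order.2
    ⟨fun a ha => Eventually.of_forall fun x => ha.trans_le ?_, fun ε hε => ?_⟩
  · exact div_nonneg (setIntegral_nonneg measurableSet_Iic fun t _ => (exp_pos _).le)
      (exp_pos _).le
  · obtain ⟨x₀, hx₀⟩ := eventually_atBot.1 (hφ'.eventually_ge_atTop (2 / ε))
    filter_upwards [eventually_le_atBot x₀] with x hx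
    have hδ : 0 < 2 / ε := by positivity
    calc (∫ t in Iic x, exp (φ t)) / exp (φ x) ≤ exp (φ x) / (2 / ε) / exp (φ x) :=
          div_le_div_of_nonneg_right
            (integral_Iic_exp_le_div hδ (fun t _ => hφ t) fun t ht => hx₀ t (ht.trans hx))
            (exp_pos _).le
      _ < ε := by
        rw [div_div_cancel_left' (exp_pos _).ne']
        field_simp
        linarith

section LeftLogConcavity

variable {φ φ' φ'' F : ℝ → ℝ}

theorem exists_lt_exp_sub_mul_deriv_pos (hφ : ∀ x, HasDerivAt φ (φ' x) x)
    (hF : ∀ x, HasDerivAt F (exp (φ x)) x) (hF_pos : ∀ x, 0 < F x)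
    (hF_tail : Tendsto (fun x => F x / exp (φ x)) atBot (𝓝 0)) (y : ℝ) :
    ∃ x < y, 0 < exp (φ x) - F x * φ' x := by
  have hW : ∀ x, HasDerivAt (fun x => F x / exp (φ x))
      ((exp (φ x) - F x * φ' x) / exp (φ x)) x := fun x => by
    refine ((hF x).div (hφ x).exp (exp_pos _).ne').congr_deriv ?_
    field_simp
  obtain ⟨x₀, hx₀W, hx₀y⟩ := ((hF_tail.eventually
    (gt_mem_nhds (div_pos (hF_pos y) (exp_pos (φ y))))).and (eventually_lt_atBot y)).exists
  obtain ⟨ξ, hξ, hξW⟩ := exists_hasDerivAt_eq_slope _ _ hx₀y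
    (fun x _ => (hW x).continuousAt.continuousWithinAt) fun x _ => hW x
  refine ⟨ξ, hξ.2, (div_pos_iff_of_pos_right (exp_pos (φ ξ))).1 ?_⟩
  rw [hξW]
  exact div_pos (sub_pos.2 hx₀W) (sub_pos.2 hx₀y)

theorem exp_sub_mul_deriv_nonneg_of_le {b x y : ℝ} (hφ : ∀ x, HasDerivAt φ (φ' x) x)
    (hφ' : ∀ x, HasDerivAt φ' (φ'' x) x) (hF : ∀ x, HasDerivAt F (exp (φ x)) x)
    (hF_pos : ∀ x, 0 < F x) (hconc : ∀ x < b, 0 < φ' x → φ'' x < 0) (hxy : x ≤ y) (hyb : y ≤ b)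
    (hx : 0 ≤ exp (φ x) - F x * φ' x) : 0 ≤ exp (φ y) - F y * φ' y := by
  have hE : ∀ t, HasDerivAt (fun t => F t * φ' t - exp (φ t)) (F t * φ'' t) t := fun t =>
    (((hF t).mul (hφ' t)).sub (hφ t).exp).congr_deriv (by ring)
  have hbound : ∀ t ∈ Ico x y, F t * φ' t - exp (φ t) = 0 → F t * φ'' t < 0 := by
    intro t ht hEt
    have hφ't : 0 < φ' t :=
      (pos_iff_pos_of_mul_pos (by linarith [exp_pos (φ t)] : 0 < F t * φ' t)).1 (hF_pos t)
    exact mul_neg_of_pos_of_neg (hF_pos t) (hconc t (ht.2.trans_le hyb) hφ't)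
  have := image_le_of_deriv_right_lt_deriv_boundary' (B := fun _ => 0) (B' := fun _ => 0)
    (fun t _ => (hE t).continuousAt.continuousWithinAt) (fun t _ => (hE t).hasDerivWithinAt)
    (by linarith) continuousOn_const (fun t _ => hasDerivWithinAt_const _ _ _) hbound
    ⟨hxy, le_rfl⟩
  linarith

theorem antitoneOn_exp_div_of_concave_of_deriv_pos {b : ℝ} (hφ : ∀ x, HasDerivAt φ (φ' x) x)
    (hφ' : ∀ x, HasDerivAt φ' (φ'' x) x) (hF : ∀ x, HasDerivAt F (exp (φ x)) x)
    (hF_pos : ∀ x, 0 < F x) (hF_tail : Tendsto (fun x => F x / exp (φ x)) atBot (𝓝 0))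
    (hconc : ∀ x < b, 0 < φ' x → φ'' x < 0) :
    AntitoneOn (fun x => exp (φ x) / F x) (Iic b) := by
  have hE : ∀ y ≤ b, 0 ≤ exp (φ y) - F y * φ' y := fun y hy => by
    obtain ⟨x, hxy, hx⟩ := exists_lt_exp_sub_mul_deriv_pos hφ hF hF_pos hF_tail y
    exact exp_sub_mul_deriv_nonneg_of_le hφ hφ' hF hF_pos hconc hxy.le hy hx.le
  have hderiv : ∀ x, HasDerivAt (fun x => exp (φ x) / F x)
      (-(exp (φ x) * (exp (φ x) - F x * φ' x)) / F x ^ 2) x := fun x =>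
    (((hφ x).exp).div (hF x) (hF_pos x).ne').congr_deriv (by ring)
  refine antitoneOn_of_hasDerivWithinAt_nonpos (convex_Iic b)
    (fun x _ => (hderiv x).continuousAt.continuousWithinAt)
    (fun x _ => (hderiv x).hasDerivWithinAt) fun x hx => ?_
  rw [interior_Iic] at hx
  exact div_nonpos_of_nonpos_of_nonneg (neg_nonpos.2 (mul_nonneg (exp_pos _).le (hE x hx.le)))
    (sq_nonneg _)

theorem antitoneOn_exp_div_integral_Iic {b : ℝ} (hφ : ∀ x, HasDerivAt φ (φ' x) x)
    (hφ' : ∀ x, HasDerivAt φ' (φ'' x) x) (hint : Integrable fun x => exp (φ x))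
    (hφ'_atBot : Tendsto φ' atBot atTop) (hconc : ∀ x < b, 0 < φ' x → φ'' x < 0) :
    AntitoneOn (fun x => exp (φ x) / ∫ t in Iic x, exp (φ t)) (Iic b) := by
  have hcont : Continuous fun x => exp (φ x) :=
    continuous_exp.comp (continuous_iff_continuousAt.2 fun x => (hφ x).continuousAt)
  have hpos : ∀ x, 0 < ∫ t in Iic x, exp (φ t) := fun x => by
    rw [setIntegral_pos_iff_support_of_nonneg_ae (ae_of_all _ fun t => (exp_pos _).le)
      hint.integrableOn, Function.support_eq_univ fun t => (exp_pos (φ t)).ne', univ_inter,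
      volume_Iic]
    exact ENNReal.zero_lt_top
  exact antitoneOn_exp_div_of_concave_of_deriv_pos hφ hφ' (hasDerivAt_integral_Iic hint hcont)
    hpos (tendsto_integral_Iic_exp_div_exp_atBot hφ hφ'_atBot) hconc

end LeftLogConcavity

section SymmGaussianMixture

variable {μ σ : ℝ}

noncomputable def symmGaussianMixtureLogPDF (μ σ x : ℝ) : ℝ :=
  log (√(2 * π * σ ^ 2))⁻¹ + -(x ^ 2 + μ ^ 2) / (2 * σ ^ 2) + log (cosh (μ / σ ^ 2 * x))

noncomputable def symmGaussianMixtureScore (μ σ x : ℝ) : ℝ :=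
  -x / σ ^ 2 + μ / σ ^ 2 * tanh (μ / σ ^ 2 * x)

theorem exp_symmGaussianMixtureLogPDF (hσ : σ ≠ 0) (x : ℝ) :
    exp (symmGaussianMixtureLogPDF μ σ x) =
      0.5 * ((√(2 * π * σ ^ 2))⁻¹ * exp (-(x - μ) ^ 2 / (2 * σ ^ 2))) +
      0.5 * ((√(2 * π * σ ^ 2))⁻¹ * exp (-(x + μ) ^ 2 / (2 * σ ^ 2))) := by
  have hminus :
      -(x - μ) ^ 2 / (2 * σ ^ 2) = -(x ^ 2 + μ ^ 2) / (2 * σ ^ 2) + μ / σ ^ 2 * x := by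
    field_simp
    ring
  have hplus :
      -(x + μ) ^ 2 / (2 * σ ^ 2) = -(x ^ 2 + μ ^ 2) / (2 * σ ^ 2) + -(μ / σ ^ 2 * x) := by
    field_simp
    ring
  rw [symmGaussianMixtureLogPDF, exp_add, exp_add, exp_log (by positivity), exp_log (cosh_pos _),
    cosh_eq, hminus, hplus, exp_add, exp_add]
  ring

theorem hasDerivAt_symmGaussianMixtureLogPDF (hσ : σ ≠ 0) (x : ℝ) :
    HasDerivAt (symmGaussianMixtureLogPDF μ σ) (symmGaussianMixtureScore μ σ x) x := by
  have hquad : HasDerivAt (fun x => -(x ^ 2 + μ ^ 2) / (2 * σ ^ 2)) (-x / σ ^ 2) x := by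
    refine ((((hasDerivAt_pow 2 x).add_const _).neg).div_const _).congr_deriv ?_
    field_simp
    ring
  have hlog : HasDerivAt (fun x => log (cosh (μ / σ ^ 2 * x)))
      (μ / σ ^ 2 * tanh (μ / σ ^ 2 * x)) x := by
    refine ((hasDerivAt_log_cosh _).comp x ((hasDerivAt_id x).const_mul _)).congr_deriv ?_
    simp [mul_comm]
  exact (hquad.const_add _).add hlog

theorem hasDerivAt_symmGaussianMixtureScore (x : ℝ) :
    HasDerivAt (symmGaussianMixtureScore μ σ)
      (-1 / σ ^ 2 + (μ / σ ^ 2) ^ 2 / cosh (μ / σ ^ 2 * x) ^ 2) x := by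
  refine ((((hasDerivAt_id x).neg).div_const _).add
    (((hasDerivAt_tanh _).comp x ((hasDerivAt_id x).const_mul _)).const_mul _)).congr_deriv ?_
  simp only [id]
  ring

theorem symmGaussianMixtureScore_deriv_neg_of_pos (hσ : σ ≠ 0) {x : ℝ} (hx : x < 0)
    (hscore : 0 < symmGaussianMixtureScore μ σ x) :
    -1 / σ ^ 2 + (μ / σ ^ 2) ^ 2 / cosh (μ / σ ^ 2 * x) ^ 2 < 0 := by
  have hσ2 : 0 < σ ^ 2 := by positivity
  set a := μ / σ ^ 2
  rcases eq_or_ne a 0 with ha | ha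
  · simpa [ha] using div_neg_of_neg_of_pos neg_one_lt_zero hσ2
  have hscore' : 0 < -x + a * σ ^ 2 * tanh (a * x) := by
    have e : σ ^ 2 * symmGaussianMixtureScore μ σ x = -x + a * σ ^ 2 * tanh (a * x) := by
      simp only [symmGaussianMixtureScore, a]
      field_simp
    exact e ▸ mul_pos hσ2 hscore
  have hkey : a ^ 2 * σ ^ 2 * (a * x * tanh (a * x)) < (a * x) ^ 2 := by
    nlinarith [mul_pos (mul_pos (sq_pos_of_ne_zero ha) (neg_pos.2 hx)) hscore']
  have hcosh := lt_cosh_sq_of_mul_tanh_lt (mul_ne_zero ha hx.ne) hkey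
  have : a ^ 2 / cosh (a * x) ^ 2 < 1 / σ ^ 2 :=
    (div_lt_div_iff₀ (by positivity) hσ2).2 (by linarith)
  rw [neg_div]
  linarith

theorem tendsto_symmGaussianMixtureScore_atBot (hσ : σ ≠ 0) :
    Tendsto (symmGaussianMixtureScore μ σ) atBot atTop := by
  have hσ2 : 0 < σ ^ 2 := by positivity
  refine tendsto_atTop_mono (fun x => ?_)
    (tendsto_atTop_add_const_right _ (-|μ / σ ^ 2|)
      (tendsto_neg_atBot_atTop.atTop_div_const hσ2))
  have : -|μ / σ ^ 2| ≤ μ / σ ^ 2 * tanh (μ / σ ^ 2 * x) := by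
    have h := abs_tanh_lt_one (μ / σ ^ 2 * x)
    have := neg_abs_le (μ / σ ^ 2 * tanh (μ / σ ^ 2 * x))
    rw [abs_mul] at this
    nlinarith [abs_nonneg (μ / σ ^ 2)]
  simp only [symmGaussianMixtureScore, neg_div]
  linarith

theorem integrable_exp_symmGaussianMixtureLogPDF (hσ : σ ≠ 0) :
    Integrable fun x => exp (symmGaussianMixtureLogPDF μ σ x) := by
  let v : NNReal := ⟨σ ^ 2, sq_nonneg σ⟩
  refine (((integrable_gaussianPDFReal μ v).const_mul 0.5).add
    ((integrable_gaussianPDFReal (-μ) v).const_mul 0.5)).congr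
    (ae_of_all _ fun x => ?_)
  simp only [Pi.add_apply, exp_symmGaussianMixtureLogPDF hσ, gaussianPDFReal,
    sub_neg_eq_add]
  rfl

end SymmGaussianMixture

/-- The symmetric Gaussian mixture `0.5·N(μ,σ²) + 0.5·N(-μ,σ²)` is left-log-concave for all
`μ ∈ ℝ` and `σ > 0`: its CDF `F` is log-concave on `(-∞, 0]`, i.e. `f/F` is nonincreasing
there. -/
theorem gaussian_mixture_left_log_concave (μ σ : ℝ) (hσ : 0 < σ)
    (f : ℝ → ℝ)
    (hf : f = fun x =>
      0.5 * ((Real.sqrt (2 * Real.pi * σ ^ 2))⁻¹ * Real.exp (-(x - μ) ^ 2 / (2 * σ ^ 2))) +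
      0.5 * ((Real.sqrt (2 * Real.pi * σ ^ 2))⁻¹ * Real.exp (-(x + μ) ^ 2 / (2 * σ ^ 2))))
    (F : ℝ → ℝ) (hF : F = fun x => ∫ t in Set.Iic x, f t) :
    AntitoneOn (fun x => f x / F x) (Set.Iic 0) := by
  have hf_exp : f = fun x => exp (symmGaussianMixtureLogPDF μ σ x) := by
    rw [hf]
    exact funext fun x => (exp_symmGaussianMixtureLogPDF hσ.ne' x).symm
  subst hF
  rw [hf_exp]
  exact antitoneOn_exp_div_integral_Iic (hasDerivAt_symmGaussianMixtureLogPDF hσ.ne')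
    hasDerivAt_symmGaussianMixtureScore (integrable_exp_symmGaussianMixtureLogPDF hσ.ne')
    (tendsto_symmGaussianMixtureScore_atBot hσ.ne')
    fun x hx => symmGaussianMixtureScore_deriv_neg_of_pos hσ.ne' hx
end

section
/- Define the selective accuracy A_F(τ) = (1 − F(τ)) / (1 − F(τ) + F(−τ)) for a CDF F with density f and threshold τ ≥ 0. Then A_F is monotonically nondecreasing on [0, ∞) if and only if f(−τ)/F(−τ) ≥ f(τ)/(1 − F(τ)) for all τ ≥ 0 (with all denominators positive); it is nonincreasing iff the reverse inequality holds for all τ ≥ 0. -/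
/-!
`A_F` is differentiable with
`A_F'(τ) = ((1 - F τ) f(-τ) - f τ F(-τ)) / (1 - F τ + F(-τ))²`,
whose sign is that of `f(-τ)/F(-τ) - f(τ)/(1 - F(τ))`. A differentiable function is monotone
(antitone) on `[0, ∞)` exactly when its derivative is nonnegative (nonpositive) there: one
direction is the mean value theorem, the other the sign of limits of difference quotients.
-/

open Set

section DerivSign

variable {g g' : ℝ → ℝ} {a : ℝ}

theorem monotoneOn_Ici_iff_hasDerivAt_nonneg (hg : ∀ x, HasDerivAt g (g' x) x) :
    MonotoneOn g (Ici a) ↔ ∀ x, a ≤ x → 0 ≤ g' x := by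
  constructor
  · intro hmono x hx
    have hacc : AccPt x (Filter.principal (Ici a)) := by
      refine AccPt.mono ?_ (Filter.principal_mono.2 (Ioi_subset_Ici hx))
      rw [accPt_principal_iff_nhdsWithin, sdiff_singleton_eq_self self_notMem_Ioi]
      infer_instance
    exact (hg x).hasDerivWithinAt.nonneg_of_monotoneOn hacc hmono
  · intro hnonneg
    refine monotoneOn_of_deriv_nonneg (convex_Ici a)
      (fun x _ => (hg x).continuousAt.continuousWithinAt)
      (fun x _ => (hg x).differentiableAt.differentiableWithinAt) fun x hx => ?_
    rw [interior_Ici] at hx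
    exact (hg x).deriv ▸ hnonneg x hx.le

theorem antitoneOn_Ici_iff_hasDerivAt_nonpos (hg : ∀ x, HasDerivAt g (g' x) x) :
    AntitoneOn g (Ici a) ↔ ∀ x, a ≤ x → g' x ≤ 0 := by
  have hneg : AntitoneOn g (Ici a) ↔ MonotoneOn (-g) (Ici a) :=
    ⟨AntitoneOn.neg, fun h => by simpa using h.neg⟩
  rw [hneg, monotoneOn_Ici_iff_hasDerivAt_nonneg fun x => (hg x).neg]
  simp only [neg_nonneg]

end DerivSign

theorem sub_mul_div_nonneg_iff {a b p q d : ℝ} (hp : 0 < p) (hq : 0 < q) (hd : 0 < d) :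
    0 ≤ (p * b - a * q) / d ↔ a / p ≤ b / q := by
  rw [le_div_iff₀ hd, zero_mul, div_le_div_iff₀ hp hq, sub_nonneg, mul_comm p]

theorem sub_mul_div_nonpos_iff {a b p q d : ℝ} (hp : 0 < p) (hq : 0 < q) (hd : 0 < d) :
    (p * b - a * q) / d ≤ 0 ↔ b / q ≤ a / p := by
  rw [div_le_iff₀ hd, zero_mul, div_le_div_iff₀ hq hp, sub_nonpos, mul_comm p]

noncomputable def selectiveAccuracy (F : ℝ → ℝ) (τ : ℝ) : ℝ :=
  (1 - F τ) / (1 - F τ + F (-τ))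

theorem hasDerivAt_selectiveAccuracy {f F : ℝ → ℝ} (hF' : ∀ x, HasDerivAt F (f x) x) {τ : ℝ}
    (hD : 1 - F τ + F (-τ) ≠ 0) :
    HasDerivAt (selectiveAccuracy F)
      (((1 - F τ) * f (-τ) - f τ * F (-τ)) / (1 - F τ + F (-τ)) ^ 2) τ := by
  have hnum : HasDerivAt (fun t => 1 - F t) (-f τ) τ := (hF' τ).const_sub 1
  have hreflect : HasDerivAt (fun t => F (-t)) (-f (-τ)) τ := by
    have hcomp : HasDerivAt (fun t => F (-t)) (f (-τ) * -1) τ :=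
      (hF' (-τ)).comp τ (hasDerivAt_neg τ)
    simpa using hcomp
  have hden : HasDerivAt (fun t => 1 - F t + F (-t)) (-f τ + -f (-τ)) τ := hnum.add hreflect
  refine (hnum.div hden hD).congr_deriv ?_
  ring

theorem selacc_monotone_iff_general (f F : ℝ → ℝ)
    (hF' : ∀ x, HasDerivAt F (f x) x)
    (hF01 : ∀ x, 0 < F x ∧ F x < 1)
    (A : ℝ → ℝ) (hA : A = fun τ => (1 - F τ) / (1 - F τ + F (-τ))) :
    (MonotoneOn A (Set.Ici 0) ↔
        ∀ τ : ℝ, 0 ≤ τ → f τ / (1 - F τ) ≤ f (-τ) / F (-τ)) ∧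
    (AntitoneOn A (Set.Ici 0) ↔
        ∀ τ : ℝ, 0 ≤ τ → f (-τ) / F (-τ) ≤ f τ / (1 - F τ)) := by
  obtain rfl : A = selectiveAccuracy F := hA
  have hsurv (τ : ℝ) : 0 < 1 - F τ := sub_pos.2 (hF01 τ).2
  have hD (τ : ℝ) : 0 < 1 - F τ + F (-τ) := add_pos (hsurv τ) (hF01 (-τ)).1
  have hderiv (τ : ℝ) := hasDerivAt_selectiveAccuracy hF' (hD τ).ne'
  constructor
  · rw [monotoneOn_Ici_iff_hasDerivAt_nonneg hderiv]
    exact forall₂_congr fun τ _ =>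
      sub_mul_div_nonneg_iff (hsurv τ) (hF01 (-τ)).1 (pow_pos (hD τ) 2)
  · rw [antitoneOn_Ici_iff_hasDerivAt_nonpos hderiv]
    exact forall₂_congr fun τ _ =>
      sub_mul_div_nonpos_iff (hsurv τ) (hF01 (-τ)).1 (pow_pos (hD τ) 2)

/-- Selective accuracy `A_F(τ) = (1 - F τ)/(1 - F τ + F (-τ))` is nondecreasing on `[0,∞)`
iff `f(-τ)/F(-τ) ≥ f(τ)/(1 - F(τ))` for all `τ ≥ 0`, and nonincreasing iff the reverse
inequality holds for all `τ ≥ 0`. -/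
theorem selacc_monotone_iff (f F : ℝ → ℝ)
    (hF' : ∀ x, HasDerivAt F (f x) x) (hfpos : ∀ x, 0 < f x)
    (hF01 : ∀ x, 0 < F x ∧ F x < 1)
    (A : ℝ → ℝ) (hA : A = fun τ => (1 - F τ) / (1 - F τ + F (-τ))) :
    (MonotoneOn A (Set.Ici 0) ↔
        ∀ τ : ℝ, 0 ≤ τ → f τ / (1 - F τ) ≤ f (-τ) / F (-τ)) ∧
    (AntitoneOn A (Set.Ici 0) ↔
        ∀ τ : ℝ, 0 ≤ τ → f (-τ) / F (-τ) ≤ f τ / (1 - F τ)) :=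
  selacc_monotone_iff_general f F hF' hF01 A hA
end

section
/- For skew-symmetric distributions F_α with fixed symmetric base density h and symmetric CDF G, if α₁ ≤ α₂ then F_{α₁}(x) ≥ F_{α₂}(x) for all x ∈ ℝ (stochastic ordering in the skew parameter). -/
/-!
The difference of the two densities, `2 h(t) (G(α₁ t) - G(α₂ t))`, is nonnegative for `t ≤ 0`
and nonpositive for `t ≥ 0` because `G` is monotone, and it has total integral `0` because both
are probability densities. A function with a single sign change from `+` to `-` and total
integral `0` has nonnegative integrals over every half-line `(-∞, x]`.
-/

open MeasureTheory Set

theorem setIntegral_Iic_nonneg_of_sign_change {φ : ℝ → ℝ} {c : ℝ} (hφ : Integrable φ)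
    (hzero : ∫ t, φ t = 0) (hleft : ∀ t ≤ c, 0 ≤ φ t) (hright : ∀ t, c < t → φ t ≤ 0)
    (x : ℝ) : 0 ≤ ∫ t in Iic x, φ t := by
  rcases le_or_gt x c with hxc | hcx
  · exact setIntegral_nonneg measurableSet_Iic fun t ht => hleft t (le_trans ht hxc)
  · have htail : ∫ t in Ioi x, φ t ≤ 0 :=
      setIntegral_nonpos measurableSet_Ioi fun t ht => hright t (hcx.trans ht)
    have hsplit := integral_add_compl (measurableSet_Iic (a := x)) hφ
    rw [compl_Iic, hzero] at hsplit
    linarith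

theorem skew_stochastic_ordering_general (h G : ℝ → ℝ)
    (hnonneg : ∀ t, 0 ≤ h t)
    (hGmono : Monotone G)
    (F : ℝ → ℝ → ℝ)
    (hF : F = fun α x => ∫ t in Set.Iic x, 2 * h t * G (α * t))
    (hint : ∀ α : ℝ, Integrable (fun t => 2 * h t * G (α * t)))
    (hprob : ∀ α : ℝ, ∫ t, 2 * h t * G (α * t) = 1) :
    ∀ α₁ α₂ x : ℝ, α₁ ≤ α₂ → F α₂ x ≤ F α₁ x := by
  intro α₁ α₂ x hα
  subst hF
  have hweight (t : ℝ) : 0 ≤ 2 * h t := mul_nonneg zero_le_two (hnonneg t)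
  have hdiff := setIntegral_Iic_nonneg_of_sign_change (c := 0)
    (φ := fun t => 2 * h t * G (α₁ * t) - 2 * h t * G (α₂ * t)) ((hint α₁).sub (hint α₂))
    (by rw [integral_sub (hint α₁) (hint α₂), hprob, hprob, sub_self])
    (fun t ht => sub_nonneg.mpr <|
      mul_le_mul_of_nonneg_left (hGmono (mul_le_mul_of_nonpos_right hα ht)) (hweight t))
    (fun t ht => sub_nonpos.mpr <|
      mul_le_mul_of_nonneg_left (hGmono (mul_le_mul_of_nonneg_right hα ht.le)) (hweight t))
    x
  rw [integral_sub (hint α₁).restrict (hint α₂).restrict, sub_nonneg] at hdiff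
  exact hdiff

/-- Stochastic ordering in the skew parameter: if `α₁ ≤ α₂` then `F_{α₁}(x) ≥ F_{α₂}(x)`
for all `x`, where `F_α(x) = ∫_{-∞}^x 2h(t)G(αt) dt`. -/
theorem skew_stochastic_ordering (h G : ℝ → ℝ)
    (hnonneg : ∀ t, 0 ≤ h t) (hsym : ∀ t, h (-t) = h t)
    (hGmono : Monotone G) (hGsym : ∀ t, G (-t) = 1 - G t)
    (F : ℝ → ℝ → ℝ)
    (hF : F = fun α x => ∫ t in Set.Iic x, 2 * h t * G (α * t))
    (hint : ∀ α : ℝ, Integrable (fun t => 2 * h t * G (α * t)))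
    (hprob : ∀ α : ℝ, ∫ t, 2 * h t * G (α * t) = 1) :
    ∀ α₁ α₂ x : ℝ, α₁ ≤ α₂ → F α₂ x ≤ F α₁ x :=
  skew_stochastic_ordering_general h G hnonneg hGmono F hF hint hprob
end

section
/- For a skew-symmetric family f_α(x) = 2h(x)G(αx) with CDF F_α, for all α ≥ 0 and τ ≥ 0: f_α(τ)/F_α(τ) ≥ f_0(τ)/F_0(τ) ≥ f_{−α}(τ)/F_{−α}(τ), where f_0 = h. -/
open MeasureTheory Set

/-! Since `f_β t = 2 h(t) G(β t)`, the likelihood ratio `f_α / f_0 = G(α t) / G(0)` is nondecreasing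
for `α ≥ 0`, so on `t ≤ τ` the density `f_α` is dominated by `f_α(τ) / f_0(τ) · f_0`; integrating
over `(-∞, τ]` gives `F_α(τ) ≤ f_α(τ) / f_0(τ) · F_0(τ)`, which is the first inequality. For `-α` the
ratio is nonincreasing and the same argument with the roles of `f_0` and `f_{-α}` exchanged gives
the second. -/

variable {X : Type*} [MeasurableSpace X] {μ : Measure X}

lemma integral_pos_of_forall_pos [NeZero μ] {u : X → ℝ} (hu : Integrable u μ)
    (hpos : ∀ x, 0 < u x) : 0 < ∫ x, u x ∂μ := by
  rw [integral_pos_iff_support_of_nonneg (fun x ↦ (hpos x).le) hu]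
  suffices Function.support u = univ by simp [this, NeZero.ne μ]
  exact eq_univ_of_forall fun x ↦ (hpos x).ne'

lemma div_integral_le_div_integral_of_ae_mul_le {u v : X → ℝ} {c d : ℝ}
    (hu : Integrable u μ) (hv : Integrable v μ) (hu₀ : 0 < ∫ x, u x ∂μ) (hv₀ : 0 < ∫ x, v x ∂μ)
    (hle : ∀ᵐ x ∂μ, c * v x ≤ d * u x) : c / ∫ x, u x ∂μ ≤ d / ∫ x, v x ∂μ := by
  rw [div_le_div_iff₀ hu₀ hv₀]
  calc c * ∫ x, v x ∂μ = ∫ x, c * v x ∂μ := (integral_const_mul c v).symm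
    _ ≤ ∫ x, d * u x ∂μ := integral_mono_ae (hv.const_mul c) (hu.const_mul d) hle
    _ = d * ∫ x, u x ∂μ := integral_const_mul d u

instance Real.neZero_volume_restrict_Iic (τ : ℝ) : NeZero (volume.restrict (Iic τ)) :=
  ⟨by simp [Measure.restrict_eq_zero]⟩

theorem skew_loggrad_ordering_general (h G : ℝ → ℝ)
    (hpos : ∀ t, 0 < h t)
    (hGmono : Monotone G) (hGpos : ∀ t, 0 < G t)
    (f : ℝ → ℝ → ℝ) (hf : f = fun α t => 2 * h t * G (α * t))
    (F : ℝ → ℝ → ℝ) (hF : F = fun α x => ∫ t in Set.Iic x, f α t)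
    (hint : ∀ α : ℝ, Integrable (f α)) :
    ∀ α τ : ℝ, 0 ≤ α → 0 ≤ τ →
      f 0 τ / F 0 τ ≤ f α τ / F α τ ∧ f (-α) τ / F (-α) τ ≤ f 0 τ / F 0 τ := by
  intro α τ hα _
  have hfpos : ∀ β t, 0 < f β t := fun β t ↦ by
    simp only [hf]; have := hpos t; have := hGpos (β * t); positivity
  have hIpos : ∀ β, 0 < ∫ t in Iic τ, f β t :=
    fun β ↦ integral_pos_of_forall_pos (hint β).integrableOn (hfpos β)
  have cross : ∀ β t, f 0 τ * f β t - f β τ * f 0 t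
      = 4 * h τ * h t * G 0 * (G (β * t) - G (β * τ)) := fun β t ↦ by
    simp only [hf, zero_mul]; ring
  have hc : ∀ t, 0 ≤ 4 * h τ * h t * G 0 := fun t ↦ by
    have := hpos τ; have := hpos t; have := hGpos 0; positivity
  have compare : ∀ β γ, (∀ t ∈ Iic τ, f β τ * f γ t ≤ f γ τ * f β t) →
      f β τ / ∫ t in Iic τ, f β t ≤ f γ τ / ∫ t in Iic τ, f γ t :=
    fun β γ hle ↦ div_integral_le_div_integral_of_ae_mul_le (hint β).integrableOn
      (hint γ).integrableOn (hIpos β) (hIpos γ)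
      ((ae_restrict_iff' measurableSet_Iic).2 (Filter.Eventually.of_forall hle))
  simp only [hF]
  refine ⟨compare 0 α fun t ht ↦ ?_, compare (-α) 0 fun t ht ↦ ?_⟩
  · have := mul_nonpos_of_nonneg_of_nonpos (hc t)
      (sub_nonpos.2 (hGmono (mul_le_mul_of_nonneg_left (mem_Iic.1 ht) hα)))
    linarith [cross α t]
  · have := mul_nonneg (hc t)
      (sub_nonneg.2 (hGmono (mul_le_mul_of_nonpos_left (mem_Iic.1 ht) (neg_nonpos.2 hα))))
    linarith [cross (-α) t]

/-- Log-gradient ordering by skew: for `α ≥ 0` and `τ ≥ 0`,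
`f_α(τ)/F_α(τ) ≥ f_0(τ)/F_0(τ) ≥ f_{-α}(τ)/F_{-α}(τ)`. -/
theorem skew_loggrad_ordering (h G : ℝ → ℝ)
    (hpos : ∀ t, 0 < h t) (hsym : ∀ t, h (-t) = h t)
    (hGmono : Monotone G) (hGpos : ∀ t, 0 < G t) (hGsym : ∀ t, G (-t) = 1 - G t)
    (f : ℝ → ℝ → ℝ) (hf : f = fun α t => 2 * h t * G (α * t))
    (F : ℝ → ℝ → ℝ) (hF : F = fun α x => ∫ t in Set.Iic x, f α t)
    (hint : ∀ α : ℝ, Integrable (f α)) :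
    ∀ α τ : ℝ, 0 ≤ α → 0 ≤ τ →
      f 0 τ / F 0 τ ≤ f α τ / F α τ ∧ f (-α) τ / F (-α) τ ≤ f 0 τ / F 0 τ :=
  skew_loggrad_ordering_general h G hpos hGmono hGpos f hf F hF hint
end

section
/- Let F_{α,μ} be the CDF of the skew-symmetric density f_{α,μ}(x) = 2h(x−μ)G(α(x−μ)). For every fixed τ ≥ 0 and μ ∈ ℝ, the selective accuracy A_{F_{α,μ}}(τ) = (1 − F_{α,μ}(τ))/(1 − F_{α,μ}(τ) + F_{α,μ}(−τ)) is monotonically nondecreasing in α. -/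
/-!
For `a ≤ b` the skewing factor `G (α (t - μ))` grows with `α` to the right of `μ` and shrinks to
its left, so the density of parameter `b` minus that of parameter `a` is `≤ 0` left of `μ`,
`≥ 0` right of it, and has total integral `0`. Hence every left tail `F_{α,μ}(x)` is
nonincreasing in `α`: the numerator `1 - F_{α,μ}(τ)` of the selective accuracy grows and the
left tail `F_{α,μ}(-τ)` shrinks, and `s / (s + t)` is nondecreasing in `s` and nonincreasing in
`t` on nonnegative reals.
-/

open MeasureTheory Set

theorem setIntegral_Iic_nonpos_of_sign_change {ν : Measure ℝ} {g : ℝ → ℝ} {c : ℝ}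
    (hg : Integrable g ν) (hg0 : ∫ t, g t ∂ν = 0)
    (hneg : ∀ t ≤ c, g t ≤ 0) (hnonneg : ∀ t, c ≤ t → 0 ≤ g t) (x : ℝ) :
    ∫ t in Iic x, g t ∂ν ≤ 0 := by
  rcases le_or_gt x c with hxc | hcx
  · exact setIntegral_nonpos measurableSet_Iic fun t ht => hneg t (le_trans ht hxc)
  · have hsplit := integral_add_compl (measurableSet_Iic (a := x)) hg
    rw [compl_Iic, hg0] at hsplit
    have hright : 0 ≤ ∫ t in Ioi x, g t ∂ν :=
      setIntegral_nonneg measurableSet_Ioi fun t ht => hnonneg t (hcx.trans ht).le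
    linarith

theorem div_add_le_div_add_of_le_of_le {s₁ s₂ t₁ t₂ : ℝ} (hs₁ : 0 ≤ s₁) (hs : s₁ ≤ s₂)
    (ht₂ : 0 ≤ t₂) (ht : t₂ ≤ t₁) : s₁ / (s₁ + t₁) ≤ s₂ / (s₂ + t₂) := by
  rcases (add_nonneg hs₁ (ht₂.trans ht)).eq_or_lt with h₁ | h₁
  · rw [← h₁, div_zero]
    exact div_nonneg (hs₁.trans hs) (add_nonneg (hs₁.trans hs) ht₂)
  rcases (add_nonneg (hs₁.trans hs) ht₂).eq_or_lt with h₂ | h₂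
  · have : s₁ = 0 := by linarith
    rw [this, zero_div, ← h₂, div_zero]
  rw [div_le_div_iff₀ h₁ h₂]
  nlinarith [mul_le_mul hs ht ht₂ (hs₁.trans hs)]

section SkewDensity

variable {h G : ℝ → ℝ}

theorem skew_density_mono_of_center_le {a b μ t : ℝ} (hG : Monotone G) (hh : 0 ≤ h (t - μ))
    (hab : a ≤ b) (ht : μ ≤ t) :
    2 * h (t - μ) * G (a * (t - μ)) ≤ 2 * h (t - μ) * G (b * (t - μ)) := by
  have : G (a * (t - μ)) ≤ G (b * (t - μ)) :=
    hG (mul_le_mul_of_nonneg_right hab (sub_nonneg.mpr ht))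
  gcongr

theorem skew_density_anti_of_le_center {a b μ t : ℝ} (hG : Monotone G) (hh : 0 ≤ h (t - μ))
    (hab : a ≤ b) (ht : t ≤ μ) :
    2 * h (t - μ) * G (b * (t - μ)) ≤ 2 * h (t - μ) * G (a * (t - μ)) := by
  have : G (b * (t - μ)) ≤ G (a * (t - μ)) :=
    hG (mul_le_mul_of_nonpos_right hab (sub_nonpos.mpr ht))
  gcongr

theorem skew_cdf_antitone (hh : ∀ t, 0 ≤ h t) (hG : Monotone G) {μ : ℝ}
    (hint : ∀ α, Integrable (fun t => 2 * h (t - μ) * G (α * (t - μ))))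
    (hprob : ∀ α, ∫ t, 2 * h (t - μ) * G (α * (t - μ)) = 1) (x : ℝ) :
    Antitone fun α => ∫ t in Iic x, 2 * h (t - μ) * G (α * (t - μ)) := by
  intro a b hab
  have hdiff := setIntegral_Iic_nonpos_of_sign_change
    (g := fun t => 2 * h (t - μ) * G (b * (t - μ)) - 2 * h (t - μ) * G (a * (t - μ)))
    ((hint b).sub (hint a))
    (by rw [integral_sub (hint b) (hint a), hprob, hprob, sub_self])
    (fun t ht => sub_nonpos.mpr (skew_density_anti_of_le_center hG (hh _) hab ht))
    (fun t ht => sub_nonneg.mpr (skew_density_mono_of_center_le hG (hh _) hab ht)) x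
  rw [integral_sub (hint b).integrableOn (hint a).integrableOn] at hdiff
  exact sub_nonpos.mp hdiff

end SkewDensity

theorem selacc_monotone_in_skew_general (h G : ℝ → ℝ)
    (hpos : ∀ t, 0 < h t)
    (hGmono : Monotone G) (hGpos : ∀ t, 0 < G t)
    (F : ℝ → ℝ → ℝ → ℝ)
    (hF : F = fun α μ x => ∫ t in Set.Iic x, 2 * h (t - μ) * G (α * (t - μ)))
    (hint : ∀ α μ : ℝ, Integrable (fun t => 2 * h (t - μ) * G (α * (t - μ))))
    (hprob : ∀ α μ : ℝ, ∫ t, 2 * h (t - μ) * G (α * (t - μ)) = 1)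
    (τ μ : ℝ) :
    Monotone (fun α => (1 - F α μ τ) / (1 - F α μ τ + F α μ (-τ))) := by
  subst hF
  intro a b hab
  have hdens : ∀ α t, 0 ≤ 2 * h (t - μ) * G (α * (t - μ)) := fun α t => by
    have := hpos (t - μ); have := hGpos (α * (t - μ)); positivity
  have hcdf := skew_cdf_antitone (fun t => (hpos t).le) hGmono (hint · μ) (hprob · μ)
  have hsurv : 0 ≤ 1 - ∫ t in Iic τ, 2 * h (t - μ) * G (a * (t - μ)) := by
    rw [sub_nonneg, ← hprob a μ]
    exact setIntegral_le_integral (hint a μ) (Filter.Eventually.of_forall (hdens a))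
  exact div_add_le_div_add_of_le_of_le hsurv (by linarith [hcdf τ hab])
    (setIntegral_nonneg measurableSet_Iic fun t _ => hdens b t) (hcdf (-τ) hab)

/-- Selective accuracy is monotone in the skew parameter: for fixed `τ ≥ 0` and `μ ∈ ℝ`,
`A_{F_{α,μ}}(τ) = (1 - F_{α,μ}(τ))/(1 - F_{α,μ}(τ) + F_{α,μ}(-τ))` is nondecreasing in
`α`. -/
theorem selacc_monotone_in_skew (h G : ℝ → ℝ)
    (hpos : ∀ t, 0 < h t) (hsym : ∀ t, h (-t) = h t)
    (hGmono : Monotone G) (hGpos : ∀ t, 0 < G t) (hGsym : ∀ t, G (-t) = 1 - G t)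
    (F : ℝ → ℝ → ℝ → ℝ)
    (hF : F = fun α μ x => ∫ t in Set.Iic x, 2 * h (t - μ) * G (α * (t - μ)))
    (hint : ∀ α μ : ℝ, Integrable (fun t => 2 * h (t - μ) * G (α * (t - μ))))
    (hprob : ∀ α μ : ℝ, ∫ t, 2 * h (t - μ) * G (α * (t - μ)) = 1)
    (τ μ : ℝ) (hτ : 0 ≤ τ) :
    Monotone (fun α => (1 - F α μ τ) / (1 - F α μ τ + F α μ (-τ))) :=
  selacc_monotone_in_skew_general h G hpos hGmono hGpos F hF hint hprob τ μ
end
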